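/- For all n, m ≥ 1, the set-product of the union of all trees with n internal vertices and the union of all trees with m internal vertices (under tree multiplication by substitution) equals the union of all trees with n·m internal vertices. -/

import Mathlib

/-- Planar binary rooted trees: either the trivial tree `leaf` (drawn `|`)
or the grafting `node l r = l ∨ r` of two trees. -/
inductive PBT : Type
  | leaf : PBT
  | node : PBT → PBT → PBT
deriving DecidableEq

namespace PBT

/-- Number of internal vertices of a tree. -/
def size : PBT → ℕ
  | leaf => 0
  | node l r => l.size + r.size + 1

/-- The dendriform sum of two trees, a set of trees:
`s + t = (s ⊣ t) ∪ (s ⊢ t)` with `s ⊣ t = sˡ ∨ (sʳ + t)`, `s ⊢ t = (s + tˡ) ∨ tʳ`,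
and the trivial tree acting as neutral element. -/
def addT : PBT → PBT → Set PBT
  | leaf, t => {t}
  | node l r, leaf => {node l r}
  | node l r, node l' r' =>
      (fun x => node l x) '' addT r (node l' r') ∪
      (fun x => node x r') '' addT (node l r) l'
termination_by s t => s.size + t.size
decreasing_by all_goals (simp [size] <;> omega)

/-- The left operation `s ⊣ t := sˡ ∨ (sʳ + t)` on trees (with `s ⊣ | = s`),
valued in sets of trees. -/
def leftT : PBT → PBT → Set PBT
  | leaf, _ => ∅
  | node l r, leaf => {node l r}
  | node l r, node l' r' => (fun x => node l x) '' addT r (node l' r')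

/-- The right operation `s ⊢ t := (s + tˡ) ∨ tʳ` on trees (with `| ⊢ t = t`),
valued in sets of trees. -/
def rightT : PBT → PBT → Set PBT
  | _, leaf => ∅
  | leaf, t => {t}
  | node l r, node l' r' => (fun x => node x r') '' addT (node l r) l'

/-- Elementwise extension of `⊣` to sets of trees. -/
def leftS (S T : Set PBT) : Set PBT := ⋃ s ∈ S, ⋃ t ∈ T, leftT s t

/-- Elementwise extension of `⊢` to sets of trees. -/
def rightS (S T : Set PBT) : Set PBT := ⋃ s ∈ S, ⋃ t ∈ T, rightT s t

/-- Elementwise extension of the sum `+` to sets of trees: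
`S + T = (S ⊣ T) ∪ (S ⊢ T)`. -/
def addS (S T : Set PBT) : Set PBT := ⋃ s ∈ S, ⋃ t ∈ T, addT s t

/-- A nonempty finite set of nontrivial trees. -/
def Good (S : Set PBT) : Prop := S.Nonempty ∧ S.Finite ∧ ∀ t ∈ S, t ≠ leaf

end PBT

namespace PBT

/-- Multiplication of a tree by a set of trees, by substitution: write
`t = tˡ ∨ tʳ` as `tˡ ⊢ 1 ⊣ tʳ` (where `1` is the one-vertex tree) and replace
each occurrence of `1` by `S`, so `t × S = (tˡ × S) ⊢ S ⊣ (tʳ × S)`. -/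
def mulT : PBT → Set PBT → Set PBT
  | leaf, _ => {leaf}
  | node l r, S => rightS (mulT l S) (leftS S (mulT r S))

/-- Elementwise extension of the multiplication to sets of trees. -/
def mulS (T S : Set PBT) : Set PBT := ⋃ t ∈ T, mulT t S

end PBT

namespace PBT

lemma size_eq_zero {t : PBT} (h : t.size = 0) : t = leaf := by
  cases t with
  | leaf => rfl
  | node l r => simp [size] at h

lemma addT_leaf_left (t : PBT) : addT leaf t = {t} := by
  cases t <;> simp [addT]

lemma addT_leaf_right (s : PBT) : addT s leaf = {s} := by
  cases s <;> simp [addT]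

lemma leftT_leaf (c : PBT) : leftT leaf c = ∅ := rfl

lemma leftT_node (p q c : PBT) : leftT (node p q) c = (node p) '' addT q c := by
  cases c with
  | leaf => simp [leftT, addT_leaf_right]
  | node a b => simp [leftT]

lemma rightT_node (a p r : PBT) : rightT a (node p r) = (fun x => node x r) '' addT a p := by
  cases a with
  | leaf => simp [rightT, addT_leaf_left]
  | node x y => simp [rightT]

lemma size_addT : ∀ s t w : PBT, w ∈ addT s t → w.size = s.size + t.size := by
  intro s t
  induction s, t using addT.induct with
  | case1 t => intro w hw; rw [addT_leaf_left] at hw; simp_all [size]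
  | case2 l r => intro w hw; rw [addT_leaf_right] at hw; simp_all [size]
  | case3 l r l' r' ih1 ih2 =>
      intro w hw
      rw [addT] at hw
      rcases hw with ⟨x, hx, rfl⟩ | ⟨x, hx, rfl⟩
      · have := ih1 x hx; simp [size] at *; omega
      · have := ih2 x hx; simp [size] at *; omega

lemma addT_surj : ∀ (w : PBT) (a b : ℕ), w.size = a + b →
    ∃ s t : PBT, s.size = a ∧ t.size = b ∧ w ∈ addT s t := by
  intro w
  induction w with
  | leaf =>
      intro a b h
      simp [size] at h
      exact ⟨leaf, leaf, by simp [size]; omega, by simp [size]; omega, by simp [addT_leaf_left]⟩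
  | node L R ihL ihR =>
      intro a b h
      rcases Nat.eq_zero_or_pos a with ha | ha
      · exact ⟨leaf, node L R, by simp [size, ha], by omega, by simp [addT_leaf_left]⟩
      rcases Nat.eq_zero_or_pos b with hb | hb
      · exact ⟨node L R, leaf, by omega, by simp [size, hb], by simp [addT_leaf_right]⟩
      simp only [size] at h
      by_cases hcase : L.size < a
      · obtain ⟨r0, t, hr0, ht, hmem⟩ := ihR (a - L.size - 1) b (by omega)
        obtain ⟨l', r', rfl⟩ : ∃ l' r', t = node l' r' := by
          cases t with
          | leaf => simp [size] at ht; omega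
          | node x y => exact ⟨x, y, rfl⟩
        refine ⟨node L r0, node l' r', by simp [size]; omega, ht, ?_⟩
        rw [addT]
        exact Or.inl ⟨R, hmem, rfl⟩
      · obtain ⟨s, l0, hs, hl0, hmem⟩ := ihL a (b - R.size - 1) (by omega)
        obtain ⟨x, y, rfl⟩ : ∃ x y, s = node x y := by
          cases s with
          | leaf => simp [size] at hs; omega
          | node x y => exact ⟨x, y, rfl⟩
        refine ⟨node x y, node l0 R, hs, by simp [size]; omega, ?_⟩
        rw [addT]
        exact Or.inr ⟨L, hmem, rfl⟩

lemma mem_mulT_node {l r : PBT} {S : Set PBT} {w : PBT} :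
    w ∈ mulT (node l r) S ↔ ∃ p q a c L R, node p q ∈ S ∧ a ∈ mulT l S ∧
      c ∈ mulT r S ∧ L ∈ addT a p ∧ R ∈ addT q c ∧ w = node L R := by
  rw [mulT]
  simp only [rightS, leftS, Set.mem_iUnion]
  constructor
  · rintro ⟨a, ha, b, hb, hw⟩
    obtain ⟨u, hu, c, hc, hbu⟩ := hb
    cases u with
    | leaf => rw [leftT_leaf] at hbu; exact absurd hbu (Set.notMem_empty b)
    | node p q =>
        rw [leftT_node] at hbu
        obtain ⟨y, hy, rfl⟩ := hbu
        rw [rightT_node] at hw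
        obtain ⟨z, hz, rfl⟩ := hw
        exact ⟨p, q, a, c, z, y, hu, ha, hc, hz, hy, rfl⟩
  · rintro ⟨p, q, a, c, L, R, hu, ha, hc, hL, hR, rfl⟩
    refine ⟨a, ha, node p R, ⟨node p q, hu, c, hc, ?_⟩, ?_⟩
    · rw [leftT_node]; exact ⟨R, hR, rfl⟩
    · rw [rightT_node]; exact ⟨L, hL, rfl⟩

lemma size_mulT {m : ℕ} : ∀ (t w : PBT), w ∈ mulT t {u : PBT | u.size = m} →
    w.size = t.size * m := by
  intro t
  induction t with
  | leaf => intro w hw; rw [mulT] at hw; simp at hw; simp [hw, size]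
  | node l r ihl ihr =>
      intro w hw
      rw [mem_mulT_node] at hw
      obtain ⟨p, q, a, c, L, R, hu, ha, hc, hL, hR, rfl⟩ := hw
      have hu' : p.size + q.size + 1 = m := by simpa [size] using hu
      have h1 := size_addT a p L hL
      have h2 := size_addT q c R hR
      have h3 := ihl a ha
      have h4 := ihr c hc
      have : (node l r).size * m = l.size * m + r.size * m + m := by
        simp [size]; ring
      rw [this]
      simp only [size]
      omega

lemma mulT_surj {m : ℕ} (hm : 1 ≤ m) : ∀ (n : ℕ) (w : PBT), w.size = n * m →
    ∃ t : PBT, t.size = n ∧ w ∈ mulT t {u : PBT | u.size = m} := by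
  intro n
  induction n using Nat.strong_induction_on with
  | _ n ih =>
    intro w hw
    rcases Nat.eq_zero_or_pos n with hn | hn
    · subst hn
      simp at hw
      exact ⟨leaf, rfl, by rw [size_eq_zero hw, mulT]; rfl⟩
    obtain ⟨k, rfl⟩ : ∃ k, n = k + 1 := ⟨n - 1, by omega⟩
    obtain ⟨L, R, rfl⟩ : ∃ L R, w = node L R := by
      cases w with
      | leaf => exfalso; simp [size] at hw; rcases hw with h | h <;> omega
      | node L R => exact ⟨L, R, rfl⟩
    simp only [size] at hw
    have hbr : (k + 1) * m = k * m + m := by ring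
    set α := L.size / m with hα
    set pL := L.size % m with hpL
    have hdm : α * m + pL = L.size := by rw [hα, hpL, Nat.mul_comm]; exact Nat.div_add_mod _ _
    have hpLm : pL < m := Nat.mod_lt _ hm
    have hαk : α ≤ k := by
      by_contra hcon
      push_neg at hcon
      have h2 : (k + 1) * m ≤ α * m := Nat.mul_le_mul_right m hcon
      omega
    set β := k - α with hβ
    have hβm : β * m = k * m - α * m := by rw [hβ, Nat.sub_mul]
    have hαβ : α * m + β * m = k * m := by
      have : α * m ≤ k * m := Nat.mul_le_mul_right m hαk
      omega
    have hRsize : R.size = (m - 1 - pL) + β * m := by omega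
    obtain ⟨a, p, hasz, hpsz, hLmem⟩ := addT_surj L (α * m) pL (by omega)
    obtain ⟨q, c, hqsz, hcsz, hRmem⟩ := addT_surj R (m - 1 - pL) (β * m) hRsize
    obtain ⟨l, hlsz, hamem⟩ := ih α (by omega) a hasz
    obtain ⟨r, hrsz, hcmem⟩ := ih β (by omega) c hcsz
    refine ⟨node l r, by simp [size]; omega, ?_⟩
    rw [mem_mulT_node]
    exact ⟨p, q, a, c, L, R, by simp [size]; omega, hamem, hcmem, hLmem, hRmem, rfl⟩

end PBT

open PBT in
/-- For `n, m ≥ 1`, the product (by substitution) of the set of all trees with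
`n` internal vertices and the set of all trees with `m` internal vertices is
the set of all trees with `n·m` internal vertices. -/
theorem mulS_PBTn (n m : ℕ) (hn : 1 ≤ n) (hm : 1 ≤ m) :
    mulS {t : PBT | t.size = n} {t : PBT | t.size = m} = {t : PBT | t.size = n * m} := by
  ext w
  simp only [mulS, Set.mem_iUnion, Set.mem_setOf_eq]
  constructor
  · rintro ⟨t, ht, hw⟩
    rw [← ht]
    exact size_mulT t w hw
  · intro hw
    obtain ⟨t, ht, hmem⟩ := mulT_surj hm n w hw
    exact ⟨t, ht, hmem⟩
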